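/- Let C and D be Z-type complexes over 𝔽₂, let V be a common logical operator subcomplex of C (determined by u, with chain map f) and of D (determined by v, with chain map g), and let Q be the Z̄-merged complex. Assume V is separated. Then the merged code satisfies n_Q = n_C + n_D − n_V, where n_V = dim V₀ is the Hamming weight of u (equivalently of v), i.e. dim Q₀ = dim C₀ + dim D₀ − dim V₀; and k_Q = k_C + k_D − 1, i.e. dim H₀(Q) = dim H₀(C) + dim H₀(D) − 1. -/
import Mathlib


/-!
STATEMENT 6: For a separated Z̄-merge of Z-type complexes C and D along a
common logical operator subcomplex V (determined by logical operators u, v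
whose supports are identified by embeddings ιC, ιD), the merged complex Q
satisfies n_Q = n_C + n_D − n_V and k_Q = k_C + k_D − 1.
-/

abbrev F2 := ZMod 2

/-- Coordinate inclusion of 𝔽₂^α into 𝔽₂^β along an embedding ι : α ↪ β. -/
noncomputable def incl {α β : Type} [Fintype α] [DecidableEq β] (ι : α ↪ β) :
    (α → F2) →ₗ[F2] (β → F2) :=
  Matrix.mulVecLin (Matrix.of fun j i => if j = ι i then 1 else 0)

lemma incl_apply {α β : Type} [Fintype α] [DecidableEq β] (ι : α ↪ β) (s : α → F2) (i : α) :
    incl ι s (ι i) = s i := by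
  simp only [incl, Matrix.mulVecLin_apply, Matrix.mulVec, dotProduct, Matrix.of_apply]
  rw [Finset.sum_eq_single i]
  · simp
  · intro b _ hb
    rw [if_neg (fun h => hb (ι.injective h).symm), zero_mul]
  · intro h; exact absurd (Finset.mem_univ i) h

lemma incl_apply_of_ne {α β : Type} [Fintype α] [DecidableEq β] (ι : α ↪ β) (s : α → F2)
    {j : β} (h : ∀ i, j ≠ ι i) : incl ι s j = 0 := by
  simp only [incl, Matrix.mulVecLin_apply, Matrix.mulVec, dotProduct, Matrix.of_apply]
  exact Finset.sum_eq_zero fun i _ => by rw [if_neg (h i), zero_mul]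

lemma incl_injective {α β : Type} [Fintype α] [DecidableEq β] (ι : α ↪ β) :
    Function.Injective (incl ι) := by
  intro s t h
  funext i
  have := congrFun h (ι i)
  rwa [incl_apply, incl_apply] at this

lemma finrank_quot_comap {M : Type} [AddCommGroup M] [Module F2 M] [FiniteDimensional F2 M]
    {N p : Submodule F2 M} (h : p ≤ N) :
    Module.finrank F2 (N ⧸ p.comap N.subtype) + Module.finrank F2 p = Module.finrank F2 N := by
  have h2 := Submodule.finrank_quotient_add_finrank (p.comap N.subtype)
  rwa [(Submodule.comapSubtypeEquivOfLe h).finrank_eq] at h2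

lemma finrank_map_mkQ {M : Type} [AddCommGroup M] [Module F2 M] [FiniteDimensional F2 M]
    {W p : Submodule F2 M} (h : W ≤ p) :
    Module.finrank F2 (Submodule.map W.mkQ p) + Module.finrank F2 W = Module.finrank F2 p := by
  have h2 := LinearMap.finrank_range_add_finrank_ker (W.mkQ.domRestrict p)
  rwa [LinearMap.range_domRestrict, LinearMap.ker_domRestrict, Submodule.ker_mkQ,
    (Submodule.comapSubtypeEquivOfLe h).finrank_eq] at h2

lemma finrank_map_of_inj {M N : Type} [AddCommGroup M] [AddCommGroup N] [Module F2 M]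
    [Module F2 N] (f : M →ₗ[F2] N) (hf : Function.Injective f) (p : Submodule F2 M) :
    Module.finrank F2 (Submodule.map f p) = Module.finrank F2 p :=
  (Submodule.equivMapOfInjective f hf p).symm.finrank_eq

lemma finrank_submodule_prod {M N : Type} [AddCommGroup M] [AddCommGroup N] [Module F2 M]
    [Module F2 N] [FiniteDimensional F2 M] [FiniteDimensional F2 N]
    (p : Submodule F2 M) (q : Submodule F2 N) :
    Module.finrank F2 (p.prod q) = Module.finrank F2 p + Module.finrank F2 q := by
  have h : p.prod q = LinearMap.range (p.subtype.prodMap q.subtype) := by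
    ext ⟨x, y⟩
    simp only [Submodule.mem_prod, LinearMap.mem_range]
    constructor
    · rintro ⟨hp, hq⟩; exact ⟨(⟨x, hp⟩, ⟨y, hq⟩), rfl⟩
    · rintro ⟨⟨a, b⟩, h⟩
      have h1 : (a : M) = x := congrArg Prod.fst h
      have h2 : (b : N) = y := congrArg Prod.snd h
      exact ⟨h1 ▸ a.2, h2 ▸ b.2⟩
  have h3 := LinearMap.finrank_range_add_finrank_ker (p.subtype.prodMap q.subtype)
  rw [LinearMap.ker_prodMap, Submodule.ker_subtype, Submodule.ker_subtype] at h3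
  rw [Submodule.prod_bot, finrank_bot, Module.finrank_prod] at h3
  rw [h]
  omega


set_option maxHeartbeats 1600000 in
theorem separated_Zbar_merge_dims
    {SC1 SC0 SCm SD1 SD0 SDm T0 : Type}
    [Fintype SC1] [Fintype SC0] [Fintype SCm]
    [Fintype SD1] [Fintype SD0] [Fintype SDm] [Fintype T0]
    [DecidableEq SC0] [DecidableEq SD0] [DecidableEq SCm] [DecidableEq SDm] [DecidableEq T0]
    -- the Z-type complexes C and D
    (dC0 : (SC1 → F2) →ₗ[F2] (SC0 → F2)) (dCm : (SC0 → F2) →ₗ[F2] (SCm → F2))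
    (dD0 : (SD1 → F2) →ₗ[F2] (SD0 → F2)) (dDm : (SD0 → F2) →ₗ[F2] (SDm → F2))
    (hC : dCm ∘ₗ dC0 = 0) (hD : dDm ∘ₗ dD0 = 0)
    -- the common support of the logical operators u = incl ιC 1, v = incl ιD 1
    (ιC : T0 ↪ SC0) (ιD : T0 ↪ SD0)
    -- u and v are nontrivial logical Z̄ operators
    (hu : incl ιC 1 ∈ LinearMap.ker dCm) (hu' : incl ιC 1 ∉ LinearMap.range dC0)
    (hv : incl ιD 1 ∈ LinearMap.ker dDm) (hv' : incl ιD 1 ∉ LinearMap.range dD0)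
    -- V is simultaneously the logical operator subcomplex of C and of D:
    -- the restrictions of ∂₋₁ to the supports have the same kernel, hence give
    -- the same surjective corestriction ∂^V onto V₋₁
    (hcommon : ∀ s : T0 → F2, dCm (incl ιC s) = 0 ↔ dDm (incl ιD s) = 0)
    -- separation property (i), (ii), (iii)
    (hsepC : ∀ u' : SC0 → F2, u' ∈ LinearMap.ker dCm → u' ∉ LinearMap.range dC0 →
      (∀ j, u' j ≠ 0 → incl ιC 1 j ≠ 0) → u' + incl ιC 1 ∈ LinearMap.range dC0)
    (hsepD : ∀ v' : SD0 → F2, v' ∈ LinearMap.ker dDm → v' ∉ LinearMap.range dD0 →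
      (∀ j, v' j ≠ 0 → incl ιD 1 j ≠ 0) → v' + incl ιD 1 ∈ LinearMap.range dD0)
    (hsep3 : ∀ s : T0 → F2,
      (incl ιC s ∈ LinearMap.ker dCm ∧ incl ιC s ∉ LinearMap.range dC0) ↔
      (incl ιD s ∈ LinearMap.ker dDm ∧ incl ιD s ∉ LinearMap.range dD0))
    -- the induced differential ∂₋₁^Q of the merged complex Q
    (dQm : (((SC0 → F2) × (SD0 → F2)) ⧸
        LinearMap.range ((incl ιC).prod (incl ιD))) →ₗ[F2]
      (((SCm → F2) × (SDm → F2)) ⧸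
        LinearMap.range ((dCm ∘ₗ incl ιC).prod (dDm ∘ₗ incl ιD))))
    (hdQm : dQm ∘ₗ (LinearMap.range ((incl ιC).prod (incl ιD))).mkQ =
      (LinearMap.range ((dCm ∘ₗ incl ιC).prod (dDm ∘ₗ incl ιD))).mkQ ∘ₗ
        (dCm.prodMap dDm)) :
    -- n_Q = n_C + n_D − n_V
    Module.finrank F2
        (((SC0 → F2) × (SD0 → F2)) ⧸ LinearMap.range ((incl ιC).prod (incl ιD))) +
        Fintype.card T0 =
      Fintype.card SC0 + Fintype.card SD0 ∧
    -- k_Q = k_C + k_D − 1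
    Module.finrank F2
        (LinearMap.ker dQm ⧸
          ((LinearMap.range
              ((LinearMap.range ((incl ιC).prod (incl ιD))).mkQ ∘ₗ (dC0.prodMap dD0))).comap
            (LinearMap.ker dQm).subtype :
            Submodule F2 (LinearMap.ker dQm))) + 1 =
      Module.finrank F2
          (LinearMap.ker dCm ⧸
            ((LinearMap.range dC0).comap (LinearMap.ker dCm).subtype :
              Submodule F2 (LinearMap.ker dCm))) +
        Module.finrank F2
          (LinearMap.ker dDm ⧸
            ((LinearMap.range dD0).comap (LinearMap.ker dDm).subtype :
              Submodule F2 (LinearMap.ker dDm))) := by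
    classical
  revert hdQm
  revert dQm
  set P : (T0 → F2) →ₗ[F2] (SC0 → F2) × (SD0 → F2) := (incl ιC).prod (incl ιD) with hP
  set W : Submodule F2 ((SC0 → F2) × (SD0 → F2)) := LinearMap.range P with hW
  have Pinj : Function.Injective P := by
    intro a b h
    exact incl_injective ιC (congrArg Prod.fst h)
  -- finrank of W
  have hWr : Module.finrank F2 W = Fintype.card T0 := by
    have h2 := LinearMap.finrank_range_add_finrank_ker P
    rw [LinearMap.ker_eq_bot.mpr Pinj, finrank_bot, Module.finrank_pi, ← hW] at h2
    omega
  -- Part 1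
  have part1 : Module.finrank F2
      (((SC0 → F2) × (SD0 → F2)) ⧸ LinearMap.range ((incl ιC).prod (incl ιD))) +
      Fintype.card T0 = Fintype.card SC0 + Fintype.card SD0 := by
    have h1 := Submodule.finrank_quotient_add_finrank W
    rw [hWr, Module.finrank_prod, Module.finrank_pi, Module.finrank_pi] at h1
    exact h1
  -- notation
  set R : Submodule F2 ((SCm → F2) × (SDm → F2)) :=
    LinearMap.range ((dCm ∘ₗ incl ιC).prod (dDm ∘ₗ incl ιD)) with hR
  intro dQm hdQm
  refine ⟨part1, ?_⟩
  set K : Submodule F2 ((SC0 → F2) × (SD0 → F2)) :=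
    Submodule.comap (dCm.prodMap dDm) R with hK
  set Z : Submodule F2 ((SC0 → F2) × (SD0 → F2)) :=
    (LinearMap.ker dCm).prod (LinearMap.ker dDm) with hZ
  set B : Submodule F2 ((SC0 → F2) × (SD0 → F2)) :=
    (LinearMap.range dC0).prod (LinearMap.range dD0) with hB
  set SZ : Submodule F2 (T0 → F2) := LinearMap.ker (dCm ∘ₗ incl ιC) with hSZ
  set SB : Submodule F2 (T0 → F2) := Submodule.comap (incl ιC) (LinearMap.range dC0) with hSB
  have addself : ∀ {γ : Type} (b : γ → F2), b + b = 0 := fun b =>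
    funext fun j => CharTwo.add_self_eq_zero _
  -- F1 : ker dQm = map mkQ K
  have F1 : LinearMap.ker dQm = Submodule.map W.mkQ K := by
    apply le_antisymm
    · intro q hq
      obtain ⟨z, rfl⟩ := W.mkQ_surjective q
      have hz := LinearMap.congr_fun hdQm z
      simp only [LinearMap.comp_apply] at hz
      rw [LinearMap.mem_ker] at hq
      rw [hq] at hz
      have hmem : (dCm.prodMap dDm) z ∈ R := by
        rw [← Submodule.ker_mkQ R, LinearMap.mem_ker, ← hz]
      exact Submodule.mem_map_of_mem hmem
    · rintro _ ⟨z, hz, rfl⟩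
      rw [LinearMap.mem_ker]
      have h2 := LinearMap.congr_fun hdQm z
      simp only [LinearMap.comp_apply] at h2
      rw [h2, Submodule.mkQ_apply, Submodule.Quotient.mk_eq_zero]
      exact hz
  -- basic inclusions
  have hBZ : B ≤ Z := Submodule.prod_mono (LinearMap.range_le_ker_iff.mpr hC)
    (LinearMap.range_le_ker_iff.mpr hD)
  have hZK : Z ≤ K := by
    rintro ⟨x, y⟩ ⟨h1, h2⟩
    have h1' : dCm x = 0 := h1
    have h2' : dDm y = 0 := h2
    show (dCm.prodMap dDm) (x, y) ∈ R
    rw [LinearMap.prodMap_apply, h1', h2']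
    exact Submodule.zero_mem R
  have hWK : W ≤ K := by
    rintro _ ⟨s, rfl⟩
    exact ⟨s, rfl⟩
  -- F4 : K = Z ⊔ W
  have F4 : K = Z ⊔ W := by
    apply le_antisymm
    · rintro ⟨x, y⟩ hxy
      simp only [hK, Submodule.mem_comap, LinearMap.prodMap_apply] at hxy
      obtain ⟨s, hs⟩ := hxy
      have hs1 : dCm (incl ιC s) = dCm x := congrArg Prod.fst hs
      have hs2 : dDm (incl ιD s) = dDm y := congrArg Prod.snd hs
      have key : (x, y) = (x + incl ιC s, y + incl ιD s) + (incl ιC s, incl ιD s) := by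
        rw [Prod.mk_add_mk, add_assoc, add_assoc, addself, addself, add_zero, add_zero]
      rw [key]
      refine Submodule.add_mem _ (Submodule.mem_sup_left ⟨?_, ?_⟩) (Submodule.mem_sup_right ⟨s, rfl⟩)
      · show dCm (x + incl ιC s) = 0
        rw [map_add, ← hs1, addself (dCm (incl ιC s))]
      · show dDm (y + incl ιD s) = 0
        rw [map_add, ← hs2, addself (dDm (incl ιD s))]
    · exact sup_le hZK hWK
  -- F5 : Z ⊓ W = map P SZ
  have F5 : Z ⊓ W = Submodule.map P SZ := by
    apply le_antisymm
    · rintro _ ⟨⟨h1, h2⟩, s, rfl⟩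
      exact ⟨s, h1, rfl⟩
    · rintro _ ⟨s, hs, rfl⟩
      have hs' : dCm (incl ιC s) = 0 := hs
      exact ⟨⟨hs', (hcommon s).mp hs'⟩, s, rfl⟩
  -- F6 : B ⊓ W = map P SB
  have F6 : B ⊓ W = Submodule.map P SB := by
    apply le_antisymm
    · rintro _ ⟨⟨h1, h2⟩, s, rfl⟩
      exact ⟨s, h1, rfl⟩
    · rintro _ ⟨s, hs', rfl⟩
      have hs : incl ιC s ∈ LinearMap.range dC0 := hs'
      have hk : dCm (incl ιC s) = 0 := by
        obtain ⟨w, hw⟩ := hs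
        rw [← hw, ← LinearMap.comp_apply, hC, LinearMap.zero_apply]
      have hd : incl ιD s ∈ LinearMap.range dD0 := by
        by_contra hcon
        exact ((hsep3 s).mpr ⟨(hcommon s).mp hk, hcon⟩).2 hs
      exact ⟨⟨hs, hd⟩, s, rfl⟩
  -- SB ≤ SZ
  have hSBZ : SB ≤ SZ := by
    intro s hs
    obtain ⟨w, hw⟩ := (hs : incl ιC s ∈ LinearMap.range dC0)
    show dCm (incl ιC s) = 0
    rw [← hw, ← LinearMap.comp_apply, hC, LinearMap.zero_apply]
  have h1SZ : (1 : T0 → F2) ∈ SZ := hu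
  -- F7 : SZ = SB ⊔ span {1}
  have F7 : SZ = SB ⊔ Submodule.span F2 {(1 : T0 → F2)} := by
    apply le_antisymm
    · intro s hs'
      have hs : dCm (incl ιC s) = 0 := hs'
      by_cases hb : incl ιC s ∈ LinearMap.range dC0
      · exact Submodule.mem_sup_left hb
      · have hsup : ∀ j, incl ιC s j ≠ 0 → incl ιC 1 j ≠ 0 := by
          intro j hj
          have : ∃ i, j = ιC i := by
            by_contra h'
            push_neg at h'
            exact hj (incl_apply_of_ne ιC s h')
          obtain ⟨i, rfl⟩ := this
          rw [incl_apply]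
          exact one_ne_zero
        have h2 := hsepC (incl ιC s) hs hb hsup
        rw [← map_add] at h2
        have key : s = (s + 1) + 1 := by
          rw [add_assoc, addself, add_zero]
        rw [key]
        exact Submodule.add_mem _ (Submodule.mem_sup_left h2)
          (Submodule.mem_sup_right (Submodule.mem_span_singleton_self 1))
    · exact sup_le hSBZ ((Submodule.span_le).mpr (Set.singleton_subset_iff.mpr h1SZ))
  -- F8 : SB ⊓ span {1} = ⊥
  have F8 : SB ⊓ Submodule.span F2 {(1 : T0 → F2)} = ⊥ := by
    rw [eq_bot_iff]
    rintro s ⟨hsb, hsp⟩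
    obtain ⟨c, rfl⟩ := Submodule.mem_span_singleton.mp hsp
    by_cases hc : c = 0
    · rw [hc, zero_smul]; exact Submodule.zero_mem ⊥
    · have hc1 : c = 1 := by
        have : ∀ d : ZMod 2, d ≠ 0 → d = 1 := by decide
        exact this c hc
      rw [hc1, one_smul] at hsb
      exact absurd hsb hu'
  have hone : (1 : T0 → F2) ≠ 0 := by
    intro h
    apply hu'
    rw [h, map_zero]
    exact Submodule.zero_mem _
  -- dimension bookkeeping
  have e8 : Module.finrank F2 SZ = Module.finrank F2 SB + 1 := by
    have h2 := Submodule.finrank_sup_add_finrank_inf_eq SB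
      (Submodule.span F2 {(1 : T0 → F2)})
    rw [← F7, F8, finrank_bot, finrank_span_singleton hone] at h2
    omega
  have e6 : Module.finrank F2 (Z ⊓ W : Submodule F2 _) = Module.finrank F2 SZ := by
    rw [F5]; exact finrank_map_of_inj P Pinj SZ
  have e7 : Module.finrank F2 (B ⊓ W : Submodule F2 _) = Module.finrank F2 SB := by
    rw [F6]; exact finrank_map_of_inj P Pinj SB
  have e4 : Module.finrank F2 K + Module.finrank F2 (Z ⊓ W : Submodule F2 _) =
      Module.finrank F2 Z + Fintype.card T0 := by
    rw [F4, ← hWr]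
    exact Submodule.finrank_sup_add_finrank_inf_eq Z W
  have e5 : Module.finrank F2 (B ⊔ W : Submodule F2 _) +
      Module.finrank F2 (B ⊓ W : Submodule F2 _) =
      Module.finrank F2 B + Fintype.card T0 := by
    rw [← hWr]
    exact Submodule.finrank_sup_add_finrank_inf_eq B W
  have e3 : Module.finrank F2 (LinearMap.ker dQm) + Fintype.card T0 = Module.finrank F2 K := by
    rw [F1, ← hWr]
    exact finrank_map_mkQ hWK
  -- range of the merged boundary
  have hrangeprod : LinearMap.range (dC0.prodMap dD0) = B := by
    ext ⟨x, y⟩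
    simp only [LinearMap.mem_range, hB, Submodule.mem_prod]
    constructor
    · rintro ⟨⟨a, b⟩, h⟩
      exact ⟨⟨a, congrArg Prod.fst h⟩, ⟨b, congrArg Prod.snd h⟩⟩
    · rintro ⟨⟨a, ha⟩, ⟨b, hb⟩⟩
      exact ⟨(a, b), by rw [LinearMap.prodMap_apply, ha, hb]⟩
  have hBQ : LinearMap.range (W.mkQ ∘ₗ (dC0.prodMap dD0)) = Submodule.map W.mkQ B := by
    rw [LinearMap.range_comp, hrangeprod]
  have hmapWbot : Submodule.map W.mkQ W = ⊥ := by
    rw [eq_bot_iff]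
    rintro _ ⟨z, hz, rfl⟩
    rw [Submodule.mem_bot, Submodule.mkQ_apply, Submodule.Quotient.mk_eq_zero]
    exact hz
  have F3 : Submodule.map W.mkQ B = Submodule.map W.mkQ (B ⊔ W) := by
    rw [Submodule.map_sup, hmapWbot, sup_bot_eq]
  have e2 : Module.finrank F2 (Submodule.map W.mkQ B) + Fintype.card T0 =
      Module.finrank F2 (B ⊔ W : Submodule F2 _) := by
    rw [F3, ← hWr]
    exact finrank_map_mkQ le_sup_right
  have hBK : B ≤ K := le_trans hBZ hZK
  have hle : LinearMap.range (W.mkQ ∘ₗ (dC0.prodMap dD0)) ≤ LinearMap.ker dQm := by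
    rw [hBQ, F1]
    exact Submodule.map_mono hBK
  have e1 := finrank_quot_comap hle
  rw [← hBQ] at e2
  have e9 := finrank_quot_comap (p := LinearMap.range dC0) (N := LinearMap.ker dCm)
    (LinearMap.range_le_ker_iff.mpr hC)
  have e10 := finrank_quot_comap (p := LinearMap.range dD0) (N := LinearMap.ker dDm)
    (LinearMap.range_le_ker_iff.mpr hD)
  have e11 : Module.finrank F2 Z =
      Module.finrank F2 (LinearMap.ker dCm) + Module.finrank F2 (LinearMap.ker dDm) :=
    finrank_submodule_prod _ _
  have e12 : Module.finrank F2 B =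
      Module.finrank F2 (LinearMap.range dC0) + Module.finrank F2 (LinearMap.range dD0) :=
    finrank_submodule_prod _ _
  omega
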